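/- Let G be a finite group and H a subgroup of G. If H is not a perfect code of G, then there exists a 2-element x ∈ G \ H (an element whose order is a power of 2) such that x² ∈ H, the index |H : H ∩ xHx^{-1}| is odd, and the double coset HxH contains no involution. -/

import Mathlib

open Pointwise

/-- A subgroup `H` of `G` is a perfect code of `G` if there is a left transversal `T`
of `H` in `G` with `T = T⁻¹` and `1 ∈ T` (a Cayley transversal). -/
def IsPerfectCode {G : Type*} [Group G] (H : Subgroup G) : Prop :=
  ∃ T : Set G, (1 : G) ∈ T ∧ T⁻¹ = T ∧ ∀ g : G, ∃! t, t ∈ T ∧ g⁻¹ * t ∈ H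

namespace PCaux

variable {G : Type*} [Group G] (H : Subgroup G)

/-- The double coset `H a H` as a set. -/
def dos (a : G) : Set G := DoubleCoset.doubleCoset a (H : Set G) (H : Set G)

lemma mem_dos_self (a : G) : a ∈ dos H a := DoubleCoset.mem_doubleCoset_self H H a

lemma dos_eq_of_mem {a b : G} (hb : b ∈ dos H a) : dos H b = dos H a :=
  DoubleCoset.doubleCoset_eq_of_mem hb

lemma mem_dos_congr {a x y : G} (hx : x ∈ dos H a) (hxy : x⁻¹ * y ∈ H) :
    y ∈ dos H a := by
  obtain ⟨h, hh, k, hk, rfl⟩ := DoubleCoset.mem_doubleCoset.1 hx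
  refine DoubleCoset.mem_doubleCoset.2 ⟨h, hh, k * ((h * a * k)⁻¹ * y), mul_mem hk hxy, by group⟩

lemma dos_inv (a : G) : (dos H a)⁻¹ = dos H a⁻¹ := by
  ext x
  simp only [Set.mem_inv, dos, DoubleCoset.mem_doubleCoset, SetLike.mem_coe]
  constructor
  · rintro ⟨h, hh, k, hk, hx⟩
    refine ⟨k⁻¹, inv_mem hk, h⁻¹, inv_mem hh, ?_⟩
    have : x = (h * a * k)⁻¹ := by rw [← hx, inv_inv]
    rw [this]; group
  · rintro ⟨h, hh, k, hk, rfl⟩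
    exact ⟨k⁻¹, inv_mem hk, h⁻¹, inv_mem hh, by group⟩

lemma dos_of_mem {a : G} (ha : a ∈ H) : dos H a = (H : Set G) := by
  ext x
  simp only [dos, DoubleCoset.mem_doubleCoset, SetLike.mem_coe]
  constructor
  · rintro ⟨h, hh, k, hk, rfl⟩
    exact mul_mem (mul_mem hh ha) hk
  · intro hx
    exact ⟨x * a⁻¹, mul_mem hx (inv_mem ha), 1, one_mem _, by group⟩

/-- key pick lemma: given cosets `C` in `dos a` and `C'` in `(dos a)⁻¹`, there is `t ∈ C`
with `t⁻¹ ∈ C'`. -/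
lemma pick {a : G} {C C' : G ⧸ H} (hC : C.out ∈ dos H a)
    (hC' : C'.out ∈ (dos H a)⁻¹) : ∃ t : G, (t : G ⧸ H) = C ∧ ((t⁻¹ : G) : G ⧸ H) = C' := by
  have h1 : (dos H a)⁻¹ = dos H (C.out)⁻¹ := by
    rw [← dos_eq_of_mem H hC, dos_inv]
  rw [h1] at hC'
  obtain ⟨h, hh, k, hk, hc⟩ := DoubleCoset.mem_doubleCoset.1 hC'
  refine ⟨C.out * h⁻¹, ?_, ?_⟩
  · rw [QuotientGroup.mk_mul_of_mem _ (inv_mem hh), QuotientGroup.out_eq']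
  · have : (C.out * h⁻¹)⁻¹ = C'.out * k⁻¹ := by rw [hc]; group
    rw [this, QuotientGroup.mk_mul_of_mem _ (inv_mem hk), QuotientGroup.out_eq']

/-- The number of left cosets of `H` inside the double coset `HxH` is the relative index
of `xHx⁻¹` in `H`. -/
lemma card_cosets (x : G) :
    Nat.card {C : G ⧸ H // C.out ∈ dos H x} =
      (H.map (MulAut.conj x).toMonoidHom).relIndex H := by
  set K : Subgroup G := H.map (MulAut.conj x).toMonoidHom with hK
  have memK : ∀ g : G, g ∈ K ↔ ∃ v ∈ H, g = x * v * x⁻¹ := by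
    intro g
    simp only [hK, Subgroup.mem_map, MulEquiv.coe_toMonoidHom, MulAut.conj_apply]
    exact ⟨fun ⟨v, hv, he⟩ => ⟨v, hv, he.symm⟩, fun ⟨v, hv, he⟩ => ⟨v, hv, he.symm⟩⟩
  have : Nat.card (↥H ⧸ K.subgroupOf H) = Nat.card {C : G ⧸ H // C.out ∈ dos H x} := by
    apply Nat.card_congr
    have wd : ∀ h : ↥H, ((((h : G) * x : G) : G ⧸ H)).out ∈ dos H x := by
      intro h
      have h1 : ((h : G) * x) ∈ dos H x :=
        DoubleCoset.mem_doubleCoset.2 ⟨h, h.2, 1, one_mem _, by group⟩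
      exact mem_dos_congr H h1 (QuotientGroup.eq.mp (QuotientGroup.out_eq' _).symm)
    refine Equiv.ofBijective
      (Quotient.lift (fun h : ↥H => (⟨(((h : G) * x : G) : G ⧸ H), wd h⟩ :
          {C : G ⧸ H // C.out ∈ dos H x})) ?_) ⟨?_, ?_⟩
    · intro h₁ h₂ hrel
      have h12 : (h₁ : G)⁻¹ * h₂ ∈ K := by
        have := QuotientGroup.leftRel_apply.mp (Quotient.eq''.mp (Quotient.sound hrel))
        exact this
      obtain ⟨v, hv, he⟩ := (memK _).1 h12
      have : ((h₁ : G) * x)⁻¹ * ((h₂ : G) * x) ∈ H := by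
        have : ((h₁ : G) * x)⁻¹ * ((h₂ : G) * x) = x⁻¹ * ((h₁ : G)⁻¹ * h₂) * x := by group
        rw [this, he]
        have e : x⁻¹ * (x * v * x⁻¹) * x = v := by group
        rw [e]; exact hv
      exact Subtype.ext (QuotientGroup.eq.mpr this)
    · intro q₁ q₂
      refine Quotient.inductionOn₂ q₁ q₂ fun h₁ h₂ he => ?_
      have he' : (((h₁ : G) * x : G) : G ⧸ H) = (((h₂ : G) * x : G) : G ⧸ H) :=
        congrArg Subtype.val he
      have hH : ((h₁ : G) * x)⁻¹ * ((h₂ : G) * x) ∈ H := QuotientGroup.eq.mp he'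
      refine Quotient.sound (QuotientGroup.leftRel_apply.mpr ?_)
      show (h₁⁻¹ * h₂ : ↥H) ∈ K.subgroupOf H
      rw [Subgroup.mem_subgroupOf]
      refine (memK _).2 ⟨((h₁ : G) * x)⁻¹ * ((h₂ : G) * x), hH, by push_cast; group⟩
    · rintro ⟨C, hC⟩
      obtain ⟨h, hh, k, hk, hc⟩ := DoubleCoset.mem_doubleCoset.1 hC
      refine ⟨Quotient.mk'' ⟨h, hh⟩, Subtype.ext ?_⟩
      show ((h * x : G) : G ⧸ H) = C
      have : ((h * x * k : G) : G ⧸ H) = C := by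
        rw [← hc, QuotientGroup.out_eq']
      rw [← this, QuotientGroup.mk_mul_of_mem _ hk]
  rw [← this]
  rfl

/-- conjugate relative indices agree -/
lemma relindex_conj_inv [Finite G] (a : G) :
    (H.map (MulAut.conj a).toMonoidHom).relIndex H =
      (H.map (MulAut.conj a⁻¹).toMonoidHom).relIndex H := by
  set K₁ : Subgroup G := H.map (MulAut.conj a).toMonoidHom with hK₁
  set K₂ : Subgroup G := H.map (MulAut.conj a⁻¹).toMonoidHom with hK₂
  have memK : ∀ (b g : G), g ∈ H.map (MulAut.conj b).toMonoidHom ↔ b⁻¹ * g * b ∈ H := by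
    intro b g
    simp only [Subgroup.mem_map, MulEquiv.coe_toMonoidHom, MulAut.conj_apply]
    constructor
    · rintro ⟨v, hv, rfl⟩
      have e : b⁻¹ * (b * v * b⁻¹) * b = v := by group
      rw [e]; exact hv
    · intro hg; exact ⟨b⁻¹ * g * b, hg, by group⟩
  have hcard : Nat.card (K₁.subgroupOf H) = Nat.card (K₂.subgroupOf H) := by
    apply Nat.card_congr
    refine ⟨fun u => ⟨⟨a⁻¹ * (u : ↥H) * a, ?_⟩, ?_⟩, fun u => ⟨⟨a * (u : ↥H) * a⁻¹, ?_⟩, ?_⟩,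
      ?_, ?_⟩
    · exact (memK a _).1 u.2
    · rw [Subgroup.mem_subgroupOf, memK]
      have e : a⁻¹⁻¹ * (a⁻¹ * ((u : ↥H) : G) * a) * a⁻¹ = ((u : ↥H) : G) := by group
      rw [e]; exact (u : ↥H).2
    · have := (memK a⁻¹ _).1 u.2
      rw [inv_inv] at this; exact this
    · rw [Subgroup.mem_subgroupOf, memK]
      have e : a⁻¹ * (a * ((u : ↥H) : G) * a⁻¹) * a = ((u : ↥H) : G) := by group
      rw [e]; exact (u : ↥H).2
    · intro u; ext; simp; group
    · intro u; ext; simp; group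
  have h1 := Subgroup.card_mul_index (K₁.subgroupOf H)
  have h2 := Subgroup.card_mul_index (K₂.subgroupOf H)
  have hpos : 0 < Nat.card (K₁.subgroupOf H) := Nat.card_pos
  unfold Subgroup.relIndex
  rw [hcard] at h1
  have := h1.trans h2.symm
  exact Nat.eq_of_mul_eq_mul_left (hcard ▸ hpos) this

lemma exists_pair_fns {α : Type*} [Finite α] (A B : Set α)
    (h : Nat.card A = Nat.card B) :
    ∃ ε ε' : α → α, (∀ C ∈ A, ε C ∈ B) ∧ (∀ C ∈ B, ε' C ∈ A) ∧
      (∀ C ∈ A, ε' (ε C) = C) ∧ (∀ C ∈ B, ε (ε' C) = C) := by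
  classical
  haveI : Fintype A := Fintype.ofFinite _
  haveI : Fintype B := Fintype.ofFinite _
  have hc : Fintype.card A = Fintype.card B := by
    rw [← Nat.card_eq_fintype_card, ← Nat.card_eq_fintype_card]; exact h
  obtain ⟨e⟩ := Fintype.card_eq.mp hc
  refine ⟨fun C => if h : C ∈ A then (e ⟨C, h⟩ : α) else C,
    fun C => if h : C ∈ B then (e.symm ⟨C, h⟩ : α) else C, ?_, ?_, ?_, ?_⟩
  · intro C hC; beta_reduce; rw [dif_pos hC]; exact (e ⟨C, hC⟩).2
  · intro C hC; beta_reduce; rw [dif_pos hC]; exact (e.symm ⟨C, hC⟩).2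
  · intro C hC
    beta_reduce
    rw [dif_pos hC, dif_pos (e ⟨C, hC⟩).2]
    have : (⟨(e ⟨C, hC⟩ : α), (e ⟨C, hC⟩).2⟩ : B) = e ⟨C, hC⟩ := rfl
    rw [this, Equiv.symm_apply_apply]
  · intro C hC
    beta_reduce
    rw [dif_pos hC, dif_pos (e.symm ⟨C, hC⟩).2]
    have : (⟨(e.symm ⟨C, hC⟩ : α), (e.symm ⟨C, hC⟩).2⟩ : A) = e.symm ⟨C, hC⟩ := rfl
    rw [this, Equiv.apply_symm_apply]

lemma even_split {α : Type*} [Finite α] (S : Set α) (h : Even (Nat.card S)) :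
    ∃ A B : Set α, A ∪ B = S ∧ Disjoint A B ∧ Nat.card A = Nat.card B := by
  obtain ⟨k, hk⟩ := h
  rw [Nat.card_coe_set_eq] at hk
  obtain ⟨A, hA, hAcard⟩ := Set.exists_subset_card_eq (show k ≤ S.ncard by omega)
  refine ⟨A, S \ A, Set.union_diff_cancel hA, Set.disjoint_sdiff_right, ?_⟩
  rw [Nat.card_coe_set_eq, Nat.card_coe_set_eq, hAcard,
    Set.ncard_diff hA, hk, hAcard]
  omega

/-- `f` is a good partial transversal selection on the set `S` of left cosets. -/
def GoodOn (S : Set (G ⧸ H)) (f : G ⧸ H → G) : Prop :=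
  ∀ C ∈ S, ((f C : G) : G ⧸ H) = C ∧ (((f C)⁻¹ : G) : G ⧸ H) ∈ S ∧
    f (((f C)⁻¹ : G) : G ⧸ H) = (f C)⁻¹ ∧ (C = ((1 : G) : G ⧸ H) → f C = 1)

lemma bip (A B : Set (G ⧸ H)) (hdisj : Disjoint A B)
    (h1 : ((1 : G) : G ⧸ H) ∉ A ∪ B)
    (ε ε' : G ⧸ H → G ⧸ H) (hε : ∀ C ∈ A, ε C ∈ B) (hε' : ∀ C ∈ B, ε' C ∈ A)
    (hεε' : ∀ C ∈ A, ε' (ε C) = C) (hε'ε : ∀ C ∈ B, ε (ε' C) = C)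
    (hpick : ∀ C ∈ A, ∀ C' ∈ B, ∃ t : G, ((t : G ⧸ H) = C) ∧ (((t⁻¹ : G) : G ⧸ H) = C')) :
    ∃ f : G ⧸ H → G, GoodOn H (A ∪ B) f := by
  classical
  have pkspec : ∀ C, ∃ t : G, C ∈ A → ((t : G ⧸ H) = C ∧ ((t⁻¹ : G) : G ⧸ H) = ε C) := by
    intro C
    by_cases hC : C ∈ A
    · obtain ⟨t, ht1, ht2⟩ := hpick C hC (ε C) (hε C hC)
      exact ⟨t, fun _ => ⟨ht1, ht2⟩⟩
    · exact ⟨1, fun h => absurd h hC⟩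
  choose pk hpk using pkspec
  refine ⟨fun C => if C ∈ A then pk C else if C ∈ B then (pk (ε' C))⁻¹ else 1, ?_⟩
  intro C hC
  beta_reduce
  rcases hC with hCA | hCB
  · have hCnB : C ∉ B := Set.disjoint_left.mp hdisj hCA
    obtain ⟨ht1, ht2⟩ := hpk C hCA
    have hfC : (if C ∈ A then pk C else if C ∈ B then (pk (ε' C))⁻¹ else 1) = pk C :=
      if_pos hCA
    rw [hfC]
    have hεCB := hε C hCA
    have hεCnA : ε C ∉ A := Set.disjoint_right.mp hdisj hεCB
    refine ⟨ht1, ?_, ?_, ?_⟩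
    · rw [ht2]; exact Or.inr hεCB
    · rw [ht2, if_neg hεCnA, if_pos hεCB, hεε' C hCA]
    · intro hC1; exact absurd (hC1 ▸ Or.inl hCA) h1
  · have hCnA : C ∉ A := Set.disjoint_right.mp hdisj hCB
    have hε'CA := hε' C hCB
    obtain ⟨ht1, ht2⟩ := hpk (ε' C) hε'CA
    have hfC : (if C ∈ A then pk C else if C ∈ B then (pk (ε' C))⁻¹ else 1) =
        (pk (ε' C))⁻¹ := by rw [if_neg hCnA, if_pos hCB]
    rw [hfC]
    refine ⟨?_, ?_, ?_, ?_⟩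
    · rw [ht2, hε'ε C hCB]
    · rw [inv_inv, ht1]; exact Or.inl hε'CA
    · rw [inv_inv, ht1, if_pos hε'CA]
    · intro hC1; exact absurd (hC1 ▸ Or.inr hCB) h1

/-- The class of a coset: all cosets in the same double coset or its inverse. -/
def cl (C : G ⧸ H) : Set (G ⧸ H) :=
  {X | X.out ∈ dos H C.out ∪ (dos H C.out)⁻¹}

lemma mem_cl_self (C : G ⧸ H) : C ∈ cl H C := Or.inl (mem_dos_self H C.out)

lemma cl_eq_of_mem {C C' : G ⧸ H} (h : C' ∈ cl H C) : cl H C' = cl H C := by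
  rcases h with h | h
  · have e : dos H C'.out = dos H C.out := dos_eq_of_mem H h
    unfold cl; rw [e]
  · have h' : C'.out ∈ dos H (C.out)⁻¹ := by rwa [← dos_inv]
    have e : dos H C'.out = (dos H C.out)⁻¹ := by
      rw [dos_eq_of_mem H h', dos_inv]
    unfold cl
    rw [e, inv_inv, Set.union_comm]

lemma out_one_mem : (((1 : G) : G ⧸ H)).out ∈ H := by
  have h := QuotientGroup.eq.mp (QuotientGroup.out_eq' ((1 : G) : G ⧸ H))
  rwa [mul_one, inv_mem_iff] at h

lemma one_out_not_mem_dos {a : G} (ha : a ∉ H) :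
    (((1 : G) : G ⧸ H)).out ∉ dos H a := by
  intro hmem
  apply ha
  have e := dos_eq_of_mem H hmem
  rw [dos_of_mem H (out_one_mem H)] at e
  have := mem_dos_self H a
  rw [← e] at this
  exact this

lemma eq_one_of_out_mem {C : G ⧸ H} (h : C.out ∈ H) : C = ((1 : G) : G ⧸ H) := by
  rw [← QuotientGroup.out_eq' C]
  exact QuotientGroup.eq.mpr (by rwa [mul_one, inv_mem_iff])

lemma exists_good [Finite G]
    (hP : ∀ x : G, x ∉ H → (∃ n : ℕ, orderOf x = 2 ^ n) → x ^ 2 ∈ H →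
      Odd ((H.map (MulAut.conj x).toMonoidHom).relIndex H) →
      ∃ z ∈ (H : Set G) * ({x} : Set G) * (H : Set G), z ^ 2 = 1 ∧ z ≠ 1)
    (C₀ : G ⧸ H) : ∃ f : G ⧸ H → G, GoodOn H (cl H C₀) f := by
  classical
  set a := C₀.out with ha_def
  by_cases ha : a ∈ H
  · refine ⟨fun _ => 1, ?_⟩
    intro C hC
    have hC1 : C = ((1 : G) : G ⧸ H) := by
      apply eq_one_of_out_mem
      rcases hC with h | h
      · rwa [dos_of_mem H ha] at h
      · rw [dos_of_mem H ha] at h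
        exact inv_mem_iff.mp (Set.mem_inv.mp h)
    refine ⟨?_, ?_, ?_, fun _ => rfl⟩
    · rw [hC1]
    · rw [inv_one]; exact hC1 ▸ hC
    · rw [inv_one]
  by_cases hinv : a⁻¹ ∈ dos H a
  · -- the double coset is inverse-closed
    have hDinv : (dos H a)⁻¹ = dos H a := by
      rw [dos_inv]; exact dos_eq_of_mem H hinv
    have hS : cl H C₀ = {C : G ⧸ H | C.out ∈ dos H a} := by
      unfold cl
      rw [← ha_def, hDinv, Set.union_self]
    set S := {C : G ⧸ H | C.out ∈ dos H a} with hS_def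
    have h1S : ((1 : G) : G ⧸ H) ∉ S := fun hm => one_out_not_mem_dos H ha hm
    -- an element t of the double coset with t² ∈ H
    obtain ⟨h0, hh0, k0, hk0, heq⟩ := DoubleCoset.mem_doubleCoset.1 hinv
    set t := a * h0 with ht_def
    have e2 : h0 * a = a⁻¹ * k0⁻¹ := by rw [heq]; group
    have ht2 : t ^ 2 ∈ H := by
      have e : t ^ 2 = k0⁻¹ * h0 := by
        calc t ^ 2 = a * (h0 * a) * h0 := by rw [pow_two, ht_def]; group
        _ = a * (a⁻¹ * k0⁻¹) * h0 := by rw [e2]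
        _ = k0⁻¹ * h0 := by group
      rw [e]; exact mul_mem (inv_mem hk0) hh0
    have htH : t ∉ H := by
      intro hmem
      apply ha
      have : a = t * h0⁻¹ := by rw [ht_def]; group
      rw [this]; exact mul_mem hmem (inv_mem hh0)
    have htD : t ∈ dos H a := DoubleCoset.mem_doubleCoset.2 ⟨1, one_mem _, h0, hh0, by rw [ht_def]; group⟩
    -- the 2-part of t
    set o := orderOf t with ho_def
    have ho : o ≠ 0 := (orderOf_pos t).ne'
    set m := o / 2 ^ (o.factorization 2) with hm_def
    have hm_odd : Odd m := by
      rw [Nat.odd_iff, ← Nat.two_dvd_ne_zero]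
      exact Nat.not_dvd_ordCompl Nat.prime_two ho
    have hm_dvd : m ∣ o := Nat.ordCompl_dvd o 2
    set x := t ^ m with hx_def
    have hx_ord : orderOf x = 2 ^ (o.factorization 2) := by
      rw [hx_def, orderOf_pow, ← ho_def, Nat.gcd_eq_right hm_dvd, hm_def,
        Nat.div_div_self (Nat.ordProj_dvd o 2) ho]
    have hmk_xt : (x : G ⧸ H) = (t : G ⧸ H) := by
      obtain ⟨j, hj⟩ := hm_odd
      have hx' : x = t * (t ^ 2) ^ j := by
        rw [hx_def, hj, pow_succ', pow_mul]
      rw [hx', QuotientGroup.mk_mul_of_mem _ (pow_mem ht2 j)]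
    have hx_notH : x ∉ H := by
      intro hxH
      apply htH
      have hmem := QuotientGroup.eq.mp hmk_xt
      have : t = x * (x⁻¹ * t) := by group
      rw [this]; exact mul_mem hxH hmem
    have hx2 : x ^ 2 ∈ H := by
      have e : x ^ 2 = (t ^ 2) ^ m := by
        rw [hx_def, ← pow_mul, ← pow_mul, mul_comm]
      rw [e]; exact pow_mem ht2 m
    have hxD : x ∈ dos H a := mem_dos_congr H htD (QuotientGroup.eq.mp hmk_xt.symm)
    have hdosx : dos H x = dos H a := dos_eq_of_mem H hxD
    have hSx : S = {C : G ⧸ H | C.out ∈ dos H x} := by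
      ext C
      show C.out ∈ dos H a ↔ C.out ∈ dos H x
      rw [hdosx]
    have hcard : Nat.card S = (H.map (MulAut.conj x).toMonoidHom).relIndex H := by
      rw [hSx]
      exact card_cosets H x
    by_cases hev : Even (Nat.card S)
    · obtain ⟨A, B, hUn, hDisj, hABcard⟩ := even_split S hev
      obtain ⟨ε, ε', he1, he2, he3, he4⟩ := exists_pair_fns A B hABcard
      have hpick : ∀ C ∈ A, ∀ C' ∈ B,
          ∃ t' : G, ((t' : G ⧸ H) = C) ∧ (((t'⁻¹ : G) : G ⧸ H) = C') := by
        intro C hCA C' hC'B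
        apply pick H (a := a)
        · exact (hUn ▸ Or.inl hCA : C ∈ S)
        · rw [hDinv]; exact (hUn ▸ Or.inr hC'B : C' ∈ S)
      have h1' : ((1 : G) : G ⧸ H) ∉ A ∪ B := by rw [hUn]; exact h1S
      obtain ⟨f, hf⟩ := bip H A B hDisj h1' ε ε' he1 he2 he3 he4 hpick
      rw [hS, ← hUn]
      exact ⟨f, hf⟩
    · -- odd number of cosets: use the hypothesis to find an involution
      have hodd : Odd ((H.map (MulAut.conj x).toMonoidHom).relIndex H) := by
        rw [← hcard]; exact Nat.not_even_iff_odd.mp hev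
      obtain ⟨z, hzmem, hz2, hz1⟩ := hP x hx_notH ⟨_, hx_ord⟩ hx2 hodd
      have hzD : z ∈ dos H a := by
        rw [← hdosx]; exact hzmem
      have hzz : z * z = 1 := by rw [← pow_two]; exact hz2
      have hzinv : z⁻¹ = z := inv_eq_of_mul_eq_one_right hzz
      set Cz : G ⧸ H := (z : G ⧸ H) with hCz_def
      have hCzS : Cz ∈ S := by
        show Cz.out ∈ dos H a
        exact mem_dos_congr H hzD (QuotientGroup.eq.mp (QuotientGroup.out_eq' Cz).symm)
      have hzH : z ∉ H := by
        intro hmem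
        apply ha
        have e := dos_eq_of_mem H hzD
        rw [dos_of_mem H hmem] at e
        have := mem_dos_self H a
        rw [← e] at this
        exact this
      set S' := S \ {Cz} with hS'_def
      have hCznS' : Cz ∉ S' := fun hm => hm.2 rfl
      have hS'card : Even (Nat.card S') := by
        have hOddS : Odd (Nat.card S) := Nat.not_even_iff_odd.mp hev
        obtain ⟨k, hk⟩ := hOddS
        have h1 : (S').ncard = S.ncard - 1 := Set.ncard_diff_singleton_of_mem hCzS
        rw [Nat.card_coe_set_eq] at hk ⊢
        rw [h1, hk]
        exact ⟨k, by omega⟩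
      obtain ⟨A, B, hUn, hDisj, hABcard⟩ := even_split S' hS'card
      obtain ⟨ε, ε', he1, he2, he3, he4⟩ := exists_pair_fns A B hABcard
      have hpick : ∀ C ∈ A, ∀ C' ∈ B,
          ∃ t' : G, ((t' : G ⧸ H) = C) ∧ (((t'⁻¹ : G) : G ⧸ H) = C') := by
        intro C hCA C' hC'B
        apply pick H (a := a)
        · exact (hUn ▸ Or.inl hCA : C ∈ S').1
        · rw [hDinv]; exact (hUn ▸ Or.inr hC'B : C' ∈ S').1
      have h1' : ((1 : G) : G ⧸ H) ∉ A ∪ B := by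
        rw [hUn]; exact fun hm => h1S hm.1
      obtain ⟨f, hf⟩ := bip H A B hDisj h1' ε ε' he1 he2 he3 he4 hpick
      rw [hUn] at hf
      refine ⟨Function.update f Cz z, ?_⟩
      rw [hS]
      intro C hC
      by_cases hCeq : C = Cz
      · subst hCeq
        rw [Function.update_self]
        refine ⟨rfl, ?_, ?_, ?_⟩
        · rw [hzinv]; exact hCzS
        · rw [hzinv]
          exact Function.update_self Cz z f
        · intro h1c
          exfalso
          apply hzH
          have := QuotientGroup.eq.mp h1c
          rwa [mul_one, inv_mem_iff] at this
      · have hCS' : C ∈ S' := ⟨hC, hCeq⟩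
        obtain ⟨hg1, hg2, hg3, hg4⟩ := hf C hCS'
        have hfC : Function.update f Cz z C = f C := Function.update_of_ne hCeq _ _
        rw [hfC]
        have hne : (((f C)⁻¹ : G) : G ⧸ H) ≠ Cz := fun he => hCznS' (he ▸ hg2)
        refine ⟨hg1, hg2.1, ?_, hg4⟩
        rw [Function.update_of_ne hne]
        exact hg3
  · -- bipartite case : the double coset is not inverse-closed
    set A := {C : G ⧸ H | C.out ∈ dos H a} with hA_def
    set B := {C : G ⧸ H | C.out ∈ dos H a⁻¹} with hB_def
    have hclAB : cl H C₀ = A ∪ B := by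
      unfold cl
      rw [← ha_def, dos_inv]
      rfl
    have hDisj : Disjoint A B := by
      rw [Set.disjoint_left]
      intro C hCA hCB
      apply hinv
      have e1 : dos H C.out = dos H a := dos_eq_of_mem H hCA
      have e2 : dos H C.out = dos H a⁻¹ := dos_eq_of_mem H hCB
      have := mem_dos_self H a⁻¹
      rw [← e2, e1] at this
      exact this
    have hcards : Nat.card A = Nat.card B := by
      have c1 : Nat.card A = (H.map (MulAut.conj a).toMonoidHom).relIndex H :=
        card_cosets H a
      have c2 : Nat.card B = (H.map (MulAut.conj a⁻¹).toMonoidHom).relIndex H :=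
        card_cosets H a⁻¹
      rw [c1, c2, relindex_conj_inv]
    obtain ⟨ε, ε', he1, he2, he3, he4⟩ := exists_pair_fns A B hcards
    have hpick : ∀ C ∈ A, ∀ C' ∈ B,
        ∃ t' : G, ((t' : G ⧸ H) = C) ∧ (((t'⁻¹ : G) : G ⧸ H) = C') := by
      intro C hCA C' hC'B
      apply pick H (a := a)
      · exact hCA
      · rw [dos_inv]; exact hC'B
    have h1' : ((1 : G) : G ⧸ H) ∉ A ∪ B := by
      rintro (hm | hm)
      · exact one_out_not_mem_dos H ha hm
      · exact one_out_not_mem_dos H (fun hmem => ha (inv_mem_iff.mp hmem)) hm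
    obtain ⟨f, hf⟩ := bip H A B hDisj h1' ε ε' he1 he2 he3 he4 hpick
    rw [hclAB]
    exact ⟨f, hf⟩

lemma exists_transversal [Finite G]
    (hP : ∀ x : G, x ∉ H → (∃ n : ℕ, orderOf x = 2 ^ n) → x ^ 2 ∈ H →
      Odd ((H.map (MulAut.conj x).toMonoidHom).relIndex H) →
      ∃ z ∈ (H : Set G) * ({x} : Set G) * (H : Set G), z ^ 2 = 1 ∧ z ≠ 1) :
    IsPerfectCode H := by
  classical
  have spec : ∀ S : Set (G ⧸ H), ∃ f : G ⧸ H → G,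
      ∀ C₀ : G ⧸ H, S = cl H C₀ → GoodOn H S f := by
    intro S
    by_cases hex : ∃ C₀ : G ⧸ H, S = cl H C₀
    · obtain ⟨C₀, rfl⟩ := hex
      obtain ⟨f, hf⟩ := exists_good H hP C₀
      exact ⟨f, fun _ _ => hf⟩
    · exact ⟨fun _ => 1, fun C₀ hC₀ => absurd ⟨C₀, hC₀⟩ hex⟩
  choose F hF using spec
  set τ : G ⧸ H → G := fun C => F (cl H C) C with hτ_def
  have good : ∀ C : G ⧸ H, GoodOn H (cl H C) (F (cl H C)) := fun C => hF (cl H C) C rfl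
  have p1 : ∀ C : G ⧸ H, ((τ C : G) : G ⧸ H) = C := fun C =>
    (good C C (mem_cl_self H C)).1
  have p3 : τ ((1 : G) : G ⧸ H) = 1 :=
    (good _ _ (mem_cl_self H _)).2.2.2 rfl
  have p2 : ∀ C : G ⧸ H, τ (((τ C)⁻¹ : G) : G ⧸ H) = (τ C)⁻¹ := by
    intro C
    obtain ⟨hg1, hg2, hg3, hg4⟩ := good C C (mem_cl_self H C)
    show F (cl H (((τ C)⁻¹ : G) : G ⧸ H)) (((τ C)⁻¹ : G) : G ⧸ H) = (τ C)⁻¹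
    rw [cl_eq_of_mem H hg2]
    exact hg3
  refine ⟨Set.range τ, ⟨((1 : G) : G ⧸ H), p3⟩, ?_, ?_⟩
  · ext u
    rw [Set.mem_inv]
    constructor
    · rintro ⟨C, hC⟩
      refine ⟨(((τ C)⁻¹ : G) : G ⧸ H), ?_⟩
      rw [p2 C, hC, inv_inv]
    · rintro ⟨C, hC⟩
      exact ⟨(((τ C)⁻¹ : G) : G ⧸ H), by rw [p2 C, hC]⟩
  · intro g
    refine ⟨τ ((g : G ⧸ H)), ⟨⟨_, rfl⟩, ?_⟩, ?_⟩
    · exact QuotientGroup.eq.mp (p1 (g : G ⧸ H)).symm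
    · rintro t' ⟨⟨C, rfl⟩, ht'⟩
      have hCg : C = ((g : G ⧸ H)) := by
        rw [← p1 C]
        exact (QuotientGroup.eq.mpr ht').symm
      rw [hCg]

end PCaux

/-- A subgroup `H` of `G` is a perfect code of `G` if there is a left transversal `T`
of `H` in `G` with `T = T⁻¹` and `1 ∈ T` (a Cayley transversal). -/
theorem not_perfect_code_two_element {G : Type*} [Group G] [Finite G]
    (H : Subgroup G) (h : ¬ IsPerfectCode H) :
    ∃ x : G, x ∉ H ∧ (∃ n : ℕ, orderOf x = 2 ^ n) ∧ x ^ 2 ∈ H ∧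
      Odd ((H.map (MulAut.conj x).toMonoidHom).relIndex H) ∧
      ¬ ∃ z ∈ (H : Set G) * ({x} : Set G) * (H : Set G), z ^ 2 = 1 ∧ z ≠ 1 := by
  by_contra hcon
  push_neg at hcon
  exact h (PCaux.exists_transversal H (fun x h1 h2 h3 h4 => hcon x h1 h2 h3 h4))
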